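/- Let f, g ∈ ℂ[[x,y]] and let l be a line in ℝ² with equation pα + qβ = N where p, q > 0. Then taking initial parts is multiplicative on supporting lines of the Newton diagram: if l and l' are the supporting lines of Δ(f) and Δ(g) parallel to l, with equations pα + qβ = N_f and pα + qβ = N_g, then in(fg, l'') = in(f,l)·in(g,l'), where l'' is the parallel line pα + qβ = N_f + N_g; in particular, Δ(fg) = Δ(f) + Δ(g) (Minkowski sum) for formal power series in two variables. -/

import Mathlib

open Pointwise

/-- The minimal value N_f of p·α + q·β on the support of f (the level of the
supporting line of the Newton diagram of f with direction (p,q)). -/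
noncomputable def minLevel (p q : ℕ) (f : MvPowerSeries (Fin 2) ℂ) : ℕ :=
  sInf {n : ℕ | ∃ e : Fin 2 →₀ ℕ, MvPowerSeries.coeff e f ≠ 0 ∧ p * e 0 + q * e 1 = n}

/-- The initial part in(f, l) of f with respect to the line l : pα + qβ = N:
the sum of the terms of f whose exponents lie on l. -/
noncomputable def initPart (p q N : ℕ) (f : MvPowerSeries (Fin 2) ℂ) :
    MvPowerSeries (Fin 2) ℂ :=
  fun e => if p * e 0 + q * e 1 = N then MvPowerSeries.coeff e f else 0

/-- The Newton diagram Δ(f) = conv(supp(f) + ℝ₊²) ⊆ ℝ². -/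
noncomputable def newtonDiagram (f : MvPowerSeries (Fin 2) ℂ) : Set (ℝ × ℝ) :=
  convexHull ℝ
    {x : ℝ × ℝ | ∃ e : Fin 2 →₀ ℕ, MvPowerSeries.coeff e f ≠ 0 ∧
      ∃ r₁ r₂ : ℝ, 0 ≤ r₁ ∧ 0 ≤ r₂ ∧ x = ((e 0 : ℝ) + r₁, (e 1 : ℝ) + r₂)}

namespace NewtonAux

abbrev Exp := Fin 2 →₀ ℕ

lemma coeff_apply' (f : MvPowerSeries (Fin 2) ℂ) (e : Exp) :
    MvPowerSeries.coeff e f = f e := rfl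

lemma coeff_initPart (p q N : ℕ) (f : MvPowerSeries (Fin 2) ℂ) (e : Exp) :
    MvPowerSeries.coeff e (initPart p q N f) =
      if p * e 0 + q * e 1 = N then MvPowerSeries.coeff e f else 0 := rfl

lemma minLevel_le {p q : ℕ} {f : MvPowerSeries (Fin 2) ℂ} {e : Exp}
    (h : MvPowerSeries.coeff e f ≠ 0) : minLevel p q f ≤ p * e 0 + q * e 1 :=
  Nat.sInf_le ⟨e, h, rfl⟩

lemma part1 (p q : ℕ) (f g : MvPowerSeries (Fin 2) ℂ) :
    initPart p q (minLevel p q f + minLevel p q g) (f * g) =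
      initPart p q (minLevel p q f) f * initPart p q (minLevel p q g) g := by
  set Nf := minLevel p q f
  set Ng := minLevel p q g
  apply MvPowerSeries.ext
  intro e
  rw [coeff_initPart, MvPowerSeries.coeff_mul]
  by_cases he : p * e 0 + q * e 1 = Nf + Ng
  · rw [if_pos he, MvPowerSeries.coeff_mul]
    apply Finset.sum_congr rfl
    intro x hx
    rw [Finset.HasAntidiagonal.mem_antidiagonal] at hx
    have h0 : x.1 0 + x.2 0 = e 0 := by rw [← hx]; rfl
    have h1 : x.1 1 + x.2 1 = e 1 := by rw [← hx]; rfl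
    have hsum : (p * x.1 0 + q * x.1 1) + (p * x.2 0 + q * x.2 1)
        = p * e 0 + q * e 1 := by rw [← h0, ← h1]; ring
    rw [coeff_initPart, coeff_initPart]
    by_cases hwa : p * x.1 0 + q * x.1 1 = Nf
    · have hwb : p * x.2 0 + q * x.2 1 = Ng := by omega
      rw [if_pos hwa, if_pos hwb]
    · rw [if_neg hwa, zero_mul]
      rcases lt_or_gt_of_ne hwa with hlt | hgt
      · have : MvPowerSeries.coeff x.1 f = 0 := by
          by_contra hc
          have := minLevel_le (p := p) (q := q) hc
          omega
        rw [this, zero_mul]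
      · have : MvPowerSeries.coeff x.2 g = 0 := by
          by_contra hc
          have := minLevel_le (p := p) (q := q) hc
          omega
        rw [this, mul_zero]
  · rw [if_neg he, MvPowerSeries.coeff_mul]
    symm
    refine Finset.sum_eq_zero fun x hx => ?_
    rw [Finset.HasAntidiagonal.mem_antidiagonal] at hx
    have h0 : x.1 0 + x.2 0 = e 0 := by rw [← hx]; rfl
    have h1 : x.1 1 + x.2 1 = e 1 := by rw [← hx]; rfl
    have hsum : (p * x.1 0 + q * x.1 1) + (p * x.2 0 + q * x.2 1)
        = p * e 0 + q * e 1 := by rw [← h0, ← h1]; ring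
    rw [coeff_initPart, coeff_initPart]
    by_cases hwa : p * x.1 0 + q * x.1 1 = Nf
    · have hwb : p * x.2 0 + q * x.2 1 ≠ Ng := by omega
      rw [if_neg hwb, mul_zero]
    · rw [if_neg hwa, zero_mul]


/-! ### Real weights and lexicographic minima -/

def W (α β : ℝ) (e : Exp) : ℝ := α * e 0 + β * e 1

lemma W_add (α β : ℝ) (a b : Exp) : W α β (a + b) = W α β a + W α β b := by
  simp only [W, Finsupp.add_apply, Nat.cast_add]; ring

lemma W_nonneg {α β : ℝ} (hα : 0 ≤ α) (hβ : 0 ≤ β) (e : Exp) : 0 ≤ W α β e :=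
  add_nonneg (mul_nonneg hα (Nat.cast_nonneg _)) (mul_nonneg hβ (Nat.cast_nonneg _))

/-- existence of a minimizer of a ℕ-valued function on a nonempty set -/
lemma exists_nat_min {A : Type*} (T : Set A) (hT : T.Nonempty) (f : A → ℕ) :
    ∃ a ∈ T, ∀ b ∈ T, f a ≤ f b := by
  obtain ⟨a, ha, hfa⟩ : ∃ a ∈ T, f a = sInf (f '' T) := by
    have := Nat.sInf_mem (hT.image f)
    simpa [Set.mem_image] using this
  exact ⟨a, ha, fun b hb => hfa ▸ Nat.sInf_le ⟨b, hb, rfl⟩⟩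

lemma exists_W_min (α β : ℝ) (hα : 0 ≤ α) (hβ : 0 ≤ β) (T : Set Exp) (hT : T.Nonempty) :
    ∃ a ∈ T, ∀ b ∈ T, W α β a ≤ W α β b := by
  rcases hα.eq_or_lt with hα0 | hαpos
  · rcases hβ.eq_or_lt with hβ0 | hβpos
    · obtain ⟨a, ha⟩ := hT
      exact ⟨a, ha, fun b hb => by simp [W, ← hα0, ← hβ0]⟩
    · obtain ⟨a, ha, hmin⟩ := exists_nat_min T hT fun e => e 1
      refine ⟨a, ha, fun b hb => ?_⟩
      have : (a 1 : ℝ) ≤ (b 1 : ℝ) := Nat.cast_le.2 (hmin b hb)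
      simp only [W, ← hα0, zero_mul, zero_add]
      exact mul_le_mul_of_nonneg_left this hβ
  · rcases hβ.eq_or_lt with hβ0 | hβpos
    · obtain ⟨a, ha, hmin⟩ := exists_nat_min T hT fun e => e 0
      refine ⟨a, ha, fun b hb => ?_⟩
      have : (a 0 : ℝ) ≤ (b 0 : ℝ) := Nat.cast_le.2 (hmin b hb)
      simp only [W, ← hβ0, zero_mul, add_zero]
      exact mul_le_mul_of_nonneg_left this hα
    · -- both positive : reduce to a finite box
      obtain ⟨t, ht⟩ := hT
      set m : ℝ := min α β with hm
      have hmpos : 0 < m := lt_min hαpos hβpos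
      set n : ℕ := max (max (t 0) (t 1)) ⌈W α β t / m⌉₊ with hn
      have hbox : ∀ b ∈ T, ¬(b 0 ≤ n ∧ b 1 ≤ n) → W α β t ≤ W α β b := by
        intro b _ hb
        have hWt : W α β t ≤ m * n := by
          calc W α β t = m * (W α β t / m) := by field_simp
          _ ≤ m * n := by
            refine mul_le_mul_of_nonneg_left ?_ hmpos.le
            exact (Nat.le_ceil _).trans (Nat.cast_le.2 (le_max_right _ _))
        rcases not_and_or.1 hb with hb0 | hb1
        · have : (n : ℝ) ≤ b 0 := Nat.cast_le.2 (by omega)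
          calc W α β t ≤ m * n := hWt
            _ ≤ α * b 0 := by
              calc m * (n:ℝ) ≤ α * n := mul_le_mul_of_nonneg_right (min_le_left _ _) (Nat.cast_nonneg _)
                _ ≤ α * b 0 := mul_le_mul_of_nonneg_left this hαpos.le
            _ ≤ W α β b := le_add_of_nonneg_right (mul_nonneg hβ (Nat.cast_nonneg _))
        · have : (n : ℝ) ≤ b 1 := Nat.cast_le.2 (by omega)
          calc W α β t ≤ m * n := hWt
            _ ≤ β * b 1 := by
              calc m * (n:ℝ) ≤ β * n := mul_le_mul_of_nonneg_right (min_le_right _ _) (Nat.cast_nonneg _)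
                _ ≤ β * b 1 := mul_le_mul_of_nonneg_left this hβpos.le
            _ ≤ W α β b := le_add_of_nonneg_left (mul_nonneg hα (Nat.cast_nonneg _))
      set T' : Set Exp := {a ∈ T | a 0 ≤ n ∧ a 1 ≤ n} with hT'
      have htT' : t ∈ T' := ⟨ht, le_max_of_le_left (le_max_left _ _), le_max_of_le_left (le_max_right _ _)⟩
      have hfin : T'.Finite := by
        have hsub : T' ⊆ Set.Iic (Finsupp.equivFunOnFinite.symm ![n, n]) := by
          intro a ha
          rw [Set.mem_Iic, Finsupp.le_def]
          intro i
          fin_cases i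
          · simpa using ha.2.1
          · simpa using ha.2.2
        exact (Set.finite_Iic _).subset hsub
      obtain ⟨a, ha, hmin⟩ := Finset.exists_min_image hfin.toFinset (W α β)
        ⟨t, hfin.mem_toFinset.2 htT'⟩
      rw [hfin.mem_toFinset] at ha
      refine ⟨a, ha.1, fun b hb => ?_⟩
      by_cases hbbox : b 0 ≤ n ∧ b 1 ≤ n
      · exact hmin b (hfin.mem_toFinset.2 ⟨hb, hbbox⟩)
      · exact (hmin t (hfin.mem_toFinset.2 htT')).trans (hbox b hb hbbox)

/-- full lexicographic minimum wrt (W, first coord, second coord) -/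
lemma exists_lexmin (α β : ℝ) (hα : 0 ≤ α) (hβ : 0 ≤ β) (T : Set Exp) (hT : T.Nonempty) :
    ∃ a ∈ T, ∀ b ∈ T, W α β a ≤ W α β b ∧
      (W α β a = W α β b → a 0 ≤ b 0 ∧ (a 0 = b 0 → a 1 ≤ b 1)) := by
  obtain ⟨a0, ha0T, ha0⟩ := exists_W_min α β hα hβ T hT
  set T1 : Set Exp := {a ∈ T | W α β a = W α β a0} with hT1
  obtain ⟨a1, ha1T1, ha1⟩ := exists_nat_min T1 ⟨a0, ha0T, rfl⟩ fun e => e 0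
  set T2 : Set Exp := {a ∈ T1 | a 0 = a1 0} with hT2
  obtain ⟨a2, ha2T2, ha2⟩ := exists_nat_min T2 ⟨a1, ha1T1, rfl⟩ fun e => e 1
  have ha2W : W α β a2 = W α β a0 := ha2T2.1.2
  have ha2T : a2 ∈ T := ha2T2.1.1
  refine ⟨a2, ha2T, fun b hb => ?_⟩
  have hW : W α β a2 ≤ W α β b := ha2W ▸ ha0 b hb
  refine ⟨hW, fun hWeq => ?_⟩
  have hbT1 : b ∈ T1 := ⟨hb, by rw [← hWeq, ha2W]⟩
  have h0 : a2 0 ≤ b 0 := ha2T2.2 ▸ ha1 b hbT1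
  refine ⟨h0, fun h0eq => ?_⟩
  have hbT2 : b ∈ T2 := ⟨hbT1, by rw [← h0eq, ha2T2.2]⟩
  exact ha2 b hbT2


lemma exp_ext {a b : Exp} (h0 : a 0 = b 0) (h1 : a 1 = b 1) : a = b := by
  ext i
  fin_cases i
  · exact h0
  · exact h1

lemma exists_coeff_ne_zero {f : MvPowerSeries (Fin 2) ℂ} (hf : f ≠ 0) :
    ∃ e : Exp, MvPowerSeries.coeff e f ≠ 0 := by
  by_contra h
  push_neg at h
  exact hf (MvPowerSeries.ext fun e => by rw [h e, map_zero])

/-- key lemma: the product of the lex-minimal terms survives in `f * g`. -/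
lemma key_mul (α β : ℝ) (hα : 0 ≤ α) (hβ : 0 ≤ β) {f g : MvPowerSeries (Fin 2) ℂ}
    (hf : f ≠ 0) (hg : g ≠ 0) :
    ∃ a b : Exp, MvPowerSeries.coeff (a + b) (f * g) ≠ 0 ∧
      (∀ a' : Exp, MvPowerSeries.coeff a' f ≠ 0 → W α β a ≤ W α β a') ∧
      (∀ b' : Exp, MvPowerSeries.coeff b' g ≠ 0 → W α β b ≤ W α β b') := by
  obtain ⟨a, haS, ha⟩ := exists_lexmin α β hα hβ {e | MvPowerSeries.coeff e f ≠ 0}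
    (exists_coeff_ne_zero hf)
  obtain ⟨b, hbS, hb⟩ := exists_lexmin α β hα hβ {e | MvPowerSeries.coeff e g ≠ 0}
    (exists_coeff_ne_zero hg)
  refine ⟨a, b, ?_, fun a' h => (ha a' h).1, fun b' h => (hb b' h).1⟩
  rw [MvPowerSeries.coeff_mul]
  refine ne_of_eq_of_ne (Finset.sum_eq_single (a, b) ?_ ?_) (mul_ne_zero haS hbS)
  · rintro ⟨x, y⟩ hxy hne
    rw [Finset.HasAntidiagonal.mem_antidiagonal] at hxy
    by_contra hprod
    have hx : MvPowerSeries.coeff x f ≠ 0 := fun h => hprod (by rw [h, zero_mul])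
    have hy : MvPowerSeries.coeff y g ≠ 0 := fun h => hprod (by rw [h, mul_zero])
    have hWx := ha x hx
    have hWy := hb y hy
    have hWsum : W α β x + W α β y = W α β a + W α β b := by
      rw [← W_add, ← W_add, hxy]
    have hWxe : W α β a = W α β x := le_antisymm hWx.1 (by linarith [hWy.1])
    have hWye : W α β b = W α β y := le_antisymm hWy.1 (by linarith)
    have h0sum : x 0 + y 0 = a 0 + b 0 := by
      have : (x + y) 0 = (a + b) 0 := by rw [hxy]
      simpa [Finsupp.add_apply] using this
    have h1sum : x 1 + y 1 = a 1 + b 1 := by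
      have : (x + y) 1 = (a + b) 1 := by rw [hxy]
      simpa [Finsupp.add_apply] using this
    have hx0 : a 0 ≤ x 0 := (hWx.2 hWxe).1
    have hy0 : b 0 ≤ y 0 := (hWy.2 hWye).1
    have hx0e : a 0 = x 0 := by omega
    have hy0e : b 0 = y 0 := by omega
    have hx1 : a 1 ≤ x 1 := (hWx.2 hWxe).2 hx0e
    have hy1 : b 1 ≤ y 1 := (hWy.2 hWye).2 hy0e
    have hxa : x = a := exp_ext hx0e.symm (by omega)
    have hyb : y = b := exp_ext hy0e.symm (by omega)
    exact hne (by rw [hxa, hyb])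
  · intro hmem
    simp at hmem


/-! ### Geometry of the Newton diagram -/

def Dset (f : MvPowerSeries (Fin 2) ℂ) : Set (ℝ × ℝ) :=
  {x : ℝ × ℝ | ∃ e : Exp, MvPowerSeries.coeff e f ≠ 0 ∧
      ∃ r₁ r₂ : ℝ, 0 ≤ r₁ ∧ 0 ≤ r₂ ∧ x = ((e 0 : ℝ) + r₁, (e 1 : ℝ) + r₂)}

lemma nd_eq (f : MvPowerSeries (Fin 2) ℂ) : newtonDiagram f = convexHull ℝ (Dset f) := rfl

def pt (e : Exp) : ℝ × ℝ := ((e 0 : ℝ), (e 1 : ℝ))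

def Q : Set (ℝ × ℝ) := {x | 0 ≤ x.1 ∧ 0 ≤ x.2}

lemma convex_Q : Convex ℝ Q := by
  intro x hx y hy a b ha hb _
  exact ⟨add_nonneg (mul_nonneg ha hx.1) (mul_nonneg hb hy.1),
    add_nonneg (mul_nonneg ha hx.2) (mul_nonneg hb hy.2)⟩

lemma closed_Q : IsClosed Q :=
  (isClosed_le continuous_const continuous_fst).inter (isClosed_le continuous_const continuous_snd)

lemma D_mul_subset (f g : MvPowerSeries (Fin 2) ℂ) : Dset (f * g) ⊆ Dset f + Dset g := by
  rintro x ⟨e, he, r1, r2, hr1, hr2, rfl⟩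
  rw [MvPowerSeries.coeff_mul] at he
  obtain ⟨xy, hxy, hne⟩ := Finset.exists_ne_zero_of_sum_ne_zero he
  rw [Finset.HasAntidiagonal.mem_antidiagonal] at hxy
  have ha : MvPowerSeries.coeff xy.1 f ≠ 0 := fun h => hne (by rw [h, zero_mul])
  have hb : MvPowerSeries.coeff xy.2 g ≠ 0 := fun h => hne (by rw [h, mul_zero])
  have h0 : xy.1 0 + xy.2 0 = e 0 := by rw [← hxy]; rfl
  have h1 : xy.1 1 + xy.2 1 = e 1 := by rw [← hxy]; rfl
  have heq : ((e 0 : ℝ) + r1, (e 1 : ℝ) + r2)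
      = ((xy.1 0 : ℝ) + r1, (xy.1 1 : ℝ) + r2) + ((xy.2 0 : ℝ) + 0, (xy.2 1 : ℝ) + 0) := by
    rw [Prod.mk_add_mk]
    have c0 : (e 0 : ℝ) = (xy.1 0 : ℝ) + (xy.2 0 : ℝ) := by rw [← h0]; push_cast; ring
    have c1 : (e 1 : ℝ) = (xy.1 1 : ℝ) + (xy.2 1 : ℝ) := by rw [← h1]; push_cast; ring
    rw [c0, c1]
    congr 1 <;> ring
  rw [heq]
  exact Set.add_mem_add ⟨xy.1, ha, r1, r2, hr1, hr2, rfl⟩ ⟨xy.2, hb, 0, 0, le_rfl, le_rfl, rfl⟩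

lemma exists_dominating (S : Set Exp) :
    ∃ F : Set Exp, F.Finite ∧ F ⊆ S ∧ ∀ e ∈ S, ∃ m ∈ F, m ≤ e := by
  refine ⟨{m | m ∈ S ∧ ∀ a ∈ S, a ≤ m → a = m}, ?_, fun m hm => hm.1, ?_⟩
  · have hanti : IsAntichain (· ≤ ·) {m | m ∈ S ∧ ∀ a ∈ S, a ≤ m → a = m} := by
      intro a ha b hb hne hle
      exact hne (hb.2 a ha.1 hle)
    exact hanti.finite_of_partiallyWellOrderedOn (Set.isPWO_of_wellQuasiOrderedLE _)
  · intro e he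
    have hfin : {a | a ∈ S ∧ a ≤ e}.Finite := (Set.finite_Iic e).subset fun a ha => ha.2
    obtain ⟨m, hm, hmin⟩ : ∃ m ∈ {a | a ∈ S ∧ a ≤ e}, ∀ a ∈ {a | a ∈ S ∧ a ≤ e}, id a ≤ id m → id m = id a := by
      obtain ⟨m, hm, hmin⟩ := Set.Finite.exists_minimalFor id _ hfin ⟨e, he, le_rfl⟩
      exact ⟨m, hm, fun a ha h => le_antisymm (hmin ha h) h⟩
    exact ⟨m, ⟨hm.1, fun a haS hale => (hmin a ⟨haS, hale.trans hm.2⟩ hale).symm⟩, hm.2⟩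

lemma nd_closed (f : MvPowerSeries (Fin 2) ℂ) : IsClosed (newtonDiagram f) := by
  obtain ⟨F, hFfin, hFS, hdom⟩ := exists_dominating {e : Exp | MvPowerSeries.coeff e f ≠ 0}
  have hD : Dset f = (pt '' F) + Q := by
    ext x
    constructor
    · rintro ⟨e, he, r1, r2, hr1, hr2, rfl⟩
      obtain ⟨m, hmF, hme⟩ := hdom e he
      have hm0 : (m 0 : ℝ) ≤ (e 0 : ℝ) := Nat.cast_le.2 (Finsupp.le_def.1 hme 0)
      have hm1 : (m 1 : ℝ) ≤ (e 1 : ℝ) := Nat.cast_le.2 (Finsupp.le_def.1 hme 1)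
      have heq : ((e 0 : ℝ) + r1, (e 1 : ℝ) + r2)
          = pt m + ((e 0 : ℝ) - m 0 + r1, (e 1 : ℝ) - m 1 + r2) := by
        rw [pt, Prod.mk_add_mk]
        congr 1 <;> ring
      rw [heq]
      exact Set.add_mem_add (Set.mem_image_of_mem _ hmF)
        ⟨by simpa using add_nonneg (by linarith : (0:ℝ) ≤ (e 0 : ℝ) - m 0) hr1,
         by simpa using add_nonneg (by linarith : (0:ℝ) ≤ (e 1 : ℝ) - m 1) hr2⟩
    · rintro ⟨u, ⟨m, hmF, rfl⟩, v, hv, rfl⟩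
      exact ⟨m, hFS hmF, v.1, v.2, hv.1, hv.2, by simp [pt, Prod.ext_iff]⟩
  rw [nd_eq, hD, convexHull_add, convex_Q.convexHull_eq]
  exact closed_Q.add_left_of_isCompact ((hFfin.image pt).isCompact_convexHull ℝ)


lemma mem_nd {f : MvPowerSeries (Fin 2) ℂ} {e : Exp} (he : MvPowerSeries.coeff e f ≠ 0)
    {r1 r2 : ℝ} (hr1 : 0 ≤ r1) (hr2 : 0 ≤ r2) :
    ((e 0 : ℝ) + r1, (e 1 : ℝ) + r2) ∈ newtonDiagram f :=
  subset_convexHull ℝ _ ⟨e, he, r1, r2, hr1, hr2, rfl⟩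

lemma reverse {f g : MvPowerSeries (Fin 2) ℂ} (hf : f ≠ 0) (hg : g ≠ 0) :
    newtonDiagram f + newtonDiagram g ⊆ newtonDiagram (f * g) := by
  intro x hx
  by_contra hnot
  obtain ⟨L, u, hxu, hsep⟩ := geometric_hahn_banach_point_closed
    (convex_convexHull ℝ (Dset (f * g))) (nd_closed (f * g)) hnot
  set α := L (1, 0) with hαdef
  set β := L (0, 1) with hβdef
  have hL : ∀ y : ℝ × ℝ, L y = α * y.1 + β * y.2 := by
    intro y
    have hy : y = y.1 • ((1:ℝ), (0:ℝ)) + y.2 • ((0:ℝ), (1:ℝ)) := by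
      simp [Prod.ext_iff]
    conv_lhs => rw [hy, map_add, map_smul, map_smul]
    rw [smul_eq_mul, smul_eq_mul]
    ring
  obtain ⟨a₀, b₀, hab₀, -, -⟩ := key_mul 0 0 le_rfl le_rfl hf hg
  set e₀ : Exp := a₀ + b₀ with he₀
  have hmem₀ : ∀ r1 r2 : ℝ, 0 ≤ r1 → 0 ≤ r2 →
      u < α * ((e₀ 0 : ℝ) + r1) + β * ((e₀ 1 : ℝ) + r2) := by
    intro r1 r2 h1 h2
    have := hsep _ (mem_nd hab₀ h1 h2)
    rwa [hL] at this
  have hα : 0 ≤ α := by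
    by_contra hneg
    push_neg at hneg
    have hc : u < α * (e₀ 0 : ℝ) + β * (e₀ 1 : ℝ) := by
      have := hmem₀ 0 0 le_rfl le_rfl
      simpa using this
    set t : ℝ := (α * (e₀ 0 : ℝ) + β * (e₀ 1 : ℝ) - u) / (-α) with htdef
    have htpos : 0 ≤ t := div_nonneg (by linarith) (by linarith)
    have h2 := hmem₀ t 0 htpos le_rfl
    have hαne : α ≠ 0 := ne_of_lt hneg
    have hαt : α * t = -(α * (e₀ 0 : ℝ) + β * (e₀ 1 : ℝ) - u) := by
      rw [htdef, div_neg, mul_neg]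
      field_simp
    rw [mul_add] at h2
    linarith
  have hβ : 0 ≤ β := by
    by_contra hneg
    push_neg at hneg
    have hc : u < α * (e₀ 0 : ℝ) + β * (e₀ 1 : ℝ) := by
      have := hmem₀ 0 0 le_rfl le_rfl
      simpa using this
    set t : ℝ := (α * (e₀ 0 : ℝ) + β * (e₀ 1 : ℝ) - u) / (-β) with htdef
    have htpos : 0 ≤ t := div_nonneg (by linarith) (by linarith)
    have h2 := hmem₀ 0 t le_rfl htpos
    have hβne : β ≠ 0 := ne_of_lt hneg
    have hβt : β * t = -(α * (e₀ 0 : ℝ) + β * (e₀ 1 : ℝ) - u) := by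
      rw [htdef, div_neg, mul_neg]
      field_simp
    rw [mul_add β] at h2
    linarith
  obtain ⟨a, b, hab, hmina, hminb⟩ := key_mul α β hα hβ hf hg
  have h1 : u < W α β a + W α β b := by
    have hm := hsep _ (mem_nd hab (le_refl (0:ℝ)) (le_refl (0:ℝ)))
    rw [hL] at hm
    have hWab : α * (((a + b) 0 : ℝ) + 0) + β * (((a + b) 1 : ℝ) + 0) = W α β a + W α β b := by
      rw [← W_add, W]
      ring
    rw [← hWab]
    exact hm
  have h2 : W α β a + W α β b ≤ L x := by
    have hsub : newtonDiagram f + newtonDiagram g ⊆ {y : ℝ × ℝ | W α β a + W α β b ≤ L y} := by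
      rw [nd_eq, nd_eq, ← convexHull_add]
      refine convexHull_min ?_ ?_
      · rintro y ⟨u1, ⟨e1, he1, r1, r2, hr1, hr2, rfl⟩, u2, ⟨e2, he2, s1, s2, hs1, hs2, rfl⟩, rfl⟩
        have hW1 : W α β a ≤ W α β e1 := hmina e1 he1
        have hW2 : W α β b ≤ W α β e2 := hminb e2 he2
        rw [Set.mem_setOf_eq, hL]
        simp only [Prod.fst_add, Prod.snd_add]
        simp only [W] at hW1 hW2 ⊢
        have n1 : 0 ≤ α * r1 := mul_nonneg hα hr1
        have n2 : 0 ≤ β * r2 := mul_nonneg hβ hr2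
        have n3 : 0 ≤ α * s1 := mul_nonneg hα hs1
        have n4 : 0 ≤ β * s2 := mul_nonneg hβ hs2
        nlinarith [hW1, hW2, n1, n2, n3, n4]
      · have hpre : {y : ℝ × ℝ | W α β a + W α β b ≤ L y}
            = (L : ℝ × ℝ →ₗ[ℝ] ℝ) ⁻¹' Set.Ici (W α β a + W α β b) := rfl
        rw [hpre]
        exact (convex_Ici _).linear_preimage _
    exact hsub hx
  linarith

end NewtonAux

/-- For nonzero f, g ∈ ℂ[[x,y]] and a direction (p,q) with p, q > 0, the initial part
is multiplicative on the supporting lines: in(fg, l'') = in(f,l)·in(g,l') where l, l',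
l'' are the supporting lines of Δ(f), Δ(g), Δ(fg) with direction (p,q) (at levels
N_f, N_g and N_f + N_g). In particular Δ(fg) = Δ(f) + Δ(g) (Minkowski sum). -/
theorem stmt_11 (p q : ℕ) (hp : 1 ≤ p) (hq : 1 ≤ q)
    (f g : MvPowerSeries (Fin 2) ℂ) (hf : f ≠ 0) (hg : g ≠ 0) :
    initPart p q (minLevel p q f + minLevel p q g) (f * g) =
      initPart p q (minLevel p q f) f * initPart p q (minLevel p q g) g ∧
    newtonDiagram (f * g) = newtonDiagram f + newtonDiagram g := by
  refine ⟨NewtonAux.part1 p q f g, ?_⟩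
  apply Set.Subset.antisymm
  · calc newtonDiagram (f * g) = convexHull ℝ (NewtonAux.Dset (f * g)) := rfl
      _ ⊆ convexHull ℝ (NewtonAux.Dset f + NewtonAux.Dset g) :=
        convexHull_mono (NewtonAux.D_mul_subset f g)
      _ = convexHull ℝ (NewtonAux.Dset f) + convexHull ℝ (NewtonAux.Dset g) :=
        convexHull_add _ _
      _ = newtonDiagram f + newtonDiagram g := rfl
  · exact NewtonAux.reverse hf hg
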